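/- arXiv:2403.10429 — 6 statements merged into one kernel-verified Lean document; each statement's English description precedes it below -/
import Mathlib

section
/- Let f : E → ℝ be convex and differentiable on a real inner product space E, with minimizer x* and L > 0 such that f is L-smooth (gradient L-Lipschitz). Then the gradient descent iterates x_{t+1} = x_t - (1/L)·∇f(x_t) satisfy ‖x_t - x*‖ ≤ ‖x_0 - x*‖ for all t ≥ 0. -/
open scoped RealInnerProductSpace

theorem stmt_3 {E : Type*} [NormedAddCommGroup E] [InnerProductSpace ℝ E]
    (f : E → ℝ) (f' : E → E) (L : ℝ) (hL : 0 < L)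
    (hconv : ∀ x y : E, f x + ⟪f' x, y - x⟫ ≤ f y)
    (hsmooth : ∀ x y : E, f y ≤ f x + ⟪f' x, y - x⟫ + L / 2 * ‖y - x‖ ^ 2)
    (xstar : E) (hmin : ∀ y : E, f xstar ≤ f y)
    (x : ℕ → E) (hx : ∀ t : ℕ, x (t + 1) = x t - (1 / L) • f' (x t)) :
    ∀ t : ℕ, ‖x t - xstar‖ ≤ ‖x 0 - xstar‖ := by
  have key : ∀ a : E, ‖a - (1 / L) • f' a - xstar‖ ≤ ‖a - xstar‖ := by
    intro a
    set g := f' a with hg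
    -- cocoercivity-type bound: ⟪g, a - xstar⟫ ≥ (1/(2L)) ‖g‖²
    have h1 : f a + ⟪g, xstar - a⟫ ≤ f xstar := hconv a xstar
    have h2 := hsmooth a (a - (1 / L) • g)
    have e1 : (a - (1 / L) • g) - a = -((1 / L) • g) := by abel
    have e2 : ⟪g, -((1 / L) • g)⟫ = -(1 / L) * ‖g‖ ^ 2 := by
      rw [inner_neg_right, real_inner_smul_right, real_inner_self_eq_norm_sq]
      ring
    have e3 : ‖-((1 / L) • g)‖ ^ 2 = (1 / L) ^ 2 * ‖g‖ ^ 2 := by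
      rw [norm_neg, norm_smul, mul_pow, Real.norm_eq_abs, sq_abs]
    rw [e1, e2, e3] at h2
    have h3 : f xstar ≤ f (a - (1 / L) • g) := hmin _
    have hcoco : 1 / (2 * L) * ‖g‖ ^ 2 ≤ ⟪g, a - xstar⟫ := by
      have hia : ⟪g, xstar - a⟫ = -⟪g, a - xstar⟫ := by
        rw [← inner_neg_right]; congr 1; abel
      rw [hia] at h1
      have hL' : L ≠ 0 := ne_of_gt hL
      have hsimp : -(1 / L) * ‖g‖ ^ 2 + L / 2 * ((1 / L) ^ 2 * ‖g‖ ^ 2)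
          = -(1 / (2 * L)) * ‖g‖ ^ 2 := by
        field_simp
        ring
      linarith [h1, h2, h3]
    -- norm expansion
    have hexp : ‖a - (1 / L) • g - xstar‖ ^ 2
        = ‖a - xstar‖ ^ 2 - 2 * (1 / L) * ⟪g, a - xstar⟫ + (1 / L) ^ 2 * ‖g‖ ^ 2 := by
      have : a - (1 / L) • g - xstar = (a - xstar) - (1 / L) • g := by abel
      rw [this, norm_sub_sq_real, real_inner_smul_right, norm_smul, mul_pow,
        Real.norm_eq_abs, sq_abs, real_inner_comm]
      ring
    have hsq : ‖a - (1 / L) • g - xstar‖ ^ 2 ≤ ‖a - xstar‖ ^ 2 := by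
      rw [hexp]
      have h4 : 2 * (1 / L) * (1 / (2 * L) * ‖g‖ ^ 2) ≤ 2 * (1 / L) * ⟪g, a - xstar⟫ := by
        apply mul_le_mul_of_nonneg_left hcoco
        positivity
      have : 2 * (1 / L) * (1 / (2 * L) * ‖g‖ ^ 2) = (1 / L) ^ 2 * ‖g‖ ^ 2 := by
        field_simp
      nlinarith
    nlinarith [norm_nonneg (a - (1 / L) • g - xstar), norm_nonneg (a - xstar)]
  intro t
  induction t with
  | zero => exact le_rfl
  | succ n ih =>
    calc ‖x (n + 1) - xstar‖ = ‖x n - (1 / L) • f' (x n) - xstar‖ := by rw [hx n]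
      _ ≤ ‖x n - xstar‖ := key (x n)
      _ ≤ ‖x 0 - xstar‖ := ih
end

section
/- Let f : E → ℝ be convex and L-smooth on a real inner product space with minimizer x*. For gradient descent x_{t+1} = x_t - (1/L)∇f(x_t), the function values satisfy f(x_T) - f(x*) ≤ L·‖x_0 - x*‖²/(2T) for all T ≥ 1. -/
open scoped RealInnerProductSpace

theorem stmt_4 {E : Type*} [NormedAddCommGroup E] [InnerProductSpace ℝ E]
    (f : E → ℝ) (f' : E → E) (L : ℝ) (hL : 0 < L)
    (hconv : ∀ x y : E, f x + ⟪f' x, y - x⟫ ≤ f y)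
    (hsmooth : ∀ x y : E, f y ≤ f x + ⟪f' x, y - x⟫ + L / 2 * ‖y - x‖ ^ 2)
    (xstar : E) (hmin : ∀ y : E, f xstar ≤ f y)
    (x : ℕ → E) (hx : ∀ t : ℕ, x (t + 1) = x t - (1 / L) • f' (x t)) :
    ∀ T : ℕ, 1 ≤ T → f (x T) - f xstar ≤ L * ‖x 0 - xstar‖ ^ 2 / (2 * T) := by
  have hL0 : (L : ℝ) ≠ 0 := ne_of_gt hL
  -- per-step key inequality
  have key : ∀ t : ℕ, f (x (t + 1)) - f xstar ≤
      L / 2 * (‖x t - xstar‖ ^ 2 - ‖x (t + 1) - xstar‖ ^ 2) := by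
    intro t
    set g := f' (x t) with hg
    have hstep : x (t + 1) - x t = -((1 / L) • g) := by rw [hx t]; abel
    have hdesc : f (x (t + 1)) ≤ f (x t) - 1 / (2 * L) * ‖g‖ ^ 2 := by
      have := hsmooth (x t) (x (t + 1))
      rw [hstep] at this
      have h1 : ⟪g, -((1 / L) • g)⟫ = -(1 / L * ‖g‖ ^ 2) := by
        rw [inner_neg_right, real_inner_smul_right, real_inner_self_eq_norm_sq]
      have h2 : ‖-((1 / L) • g)‖ ^ 2 = (1 / L) ^ 2 * ‖g‖ ^ 2 := by
        rw [norm_neg, norm_smul]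
        simp [abs_of_pos (by positivity : (0:ℝ) < 1 / L), mul_pow]
      rw [h1, h2] at this
      calc f (x (t + 1)) ≤ f (x t) + -(1 / L * ‖g‖ ^ 2) + L / 2 * ((1 / L) ^ 2 * ‖g‖ ^ 2) := this
        _ = f (x t) - 1 / (2 * L) * ‖g‖ ^ 2 := by field_simp; ring
    have hcv : f (x t) ≤ f xstar + ⟪g, x t - xstar⟫ := by
      have := hconv (x t) xstar
      have h1 : ⟪g, xstar - x t⟫ = -⟪g, x t - xstar⟫ := by
        rw [← inner_neg_right]; congr 1; abel
      linarith [this, h1.le, h1.ge]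
    have hexp : ‖x (t + 1) - xstar‖ ^ 2 =
        ‖x t - xstar‖ ^ 2 - 2 / L * ⟪g, x t - xstar⟫ + (1 / L) ^ 2 * ‖g‖ ^ 2 := by
      have : x (t + 1) - xstar = (x t - xstar) - (1 / L) • g := by rw [hx t]; abel
      rw [this, @norm_sub_sq_real, real_inner_smul_right, norm_smul,
        real_inner_comm]
      simp [abs_of_pos (by positivity : (0:ℝ) < 1 / L), mul_pow]
      ring
    have : L / 2 * (‖x t - xstar‖ ^ 2 - ‖x (t + 1) - xstar‖ ^ 2)
        = ⟪g, x t - xstar⟫ - 1 / (2 * L) * ‖g‖ ^ 2 := by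
      rw [hexp]; field_simp; ring
    linarith
  -- monotone decrease
  have hmono : ∀ t : ℕ, f (x (t + 1)) ≤ f (x t) := by
    intro t
    have := hsmooth (x t) (x (t + 1))
    have hstep : x (t + 1) - x t = -((1 / L) • f' (x t)) := by rw [hx t]; abel
    rw [hstep] at this
    have h1 : ⟪f' (x t), -((1 / L) • f' (x t))⟫ = -(1 / L * ‖f' (x t)‖ ^ 2) := by
      rw [inner_neg_right, real_inner_smul_right, real_inner_self_eq_norm_sq]
    have h2 : ‖-((1 / L) • f' (x t))‖ ^ 2 = (1 / L) ^ 2 * ‖f' (x t)‖ ^ 2 := by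
      rw [norm_neg, norm_smul]
      simp [abs_of_pos (by positivity : (0:ℝ) < 1 / L), mul_pow]
    rw [h1, h2] at this
    have hnn : 0 ≤ 1 / (2 * L) * ‖f' (x t)‖ ^ 2 := by positivity
    have heq : L / 2 * ((1 / L) ^ 2 * ‖f' (x t)‖ ^ 2) = 1 / (2 * L) * ‖f' (x t)‖ ^ 2 := by
      field_simp
    have heq2 : 1 / L * ‖f' (x t)‖ ^ 2 = 2 * (1 / (2 * L) * ‖f' (x t)‖ ^ 2) := by
      field_simp
    linarith
  have hmono' : ∀ s t : ℕ, s ≤ t → f (x t) ≤ f (x s) := by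
    intro s t hst
    induction t with
    | zero => simp_all
    | succ n ih =>
      rcases Nat.lt_or_ge s (n + 1) with h | h
      · exact le_trans (hmono n) (ih (Nat.lt_succ_iff.mp h))
      · have : s = n + 1 := le_antisymm hst h
        subst this; exact le_rfl
  intro T hT
  have hTpos : (0:ℝ) < (T : ℝ) := by exact_mod_cast hT
  -- sum of per-step bounds telescopes
  have hsum : (T : ℝ) * (f (x T) - f xstar) ≤ L / 2 * ‖x 0 - xstar‖ ^ 2 := by
    have h1 : (T : ℝ) * (f (x T) - f xstar) ≤
        ∑ t ∈ Finset.range T, (f (x (t + 1)) - f xstar) := by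
      calc (T : ℝ) * (f (x T) - f xstar)
            = ∑ _t ∈ Finset.range T, (f (x T) - f xstar) := by
              rw [Finset.sum_const, Finset.card_range, nsmul_eq_mul]
          _ ≤ ∑ t ∈ Finset.range T, (f (x (t + 1)) - f xstar) := by
              apply Finset.sum_le_sum
              intro t ht
              have := hmono' (t + 1) T (Finset.mem_range.mp ht)
              linarith
    have h2 : ∑ t ∈ Finset.range T, (f (x (t + 1)) - f xstar) ≤
        ∑ t ∈ Finset.range T, (L / 2 * (‖x t - xstar‖ ^ 2 - ‖x (t + 1) - xstar‖ ^ 2)) :=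
      Finset.sum_le_sum fun t _ => key t
    have h3 : ∑ t ∈ Finset.range T, (L / 2 * (‖x t - xstar‖ ^ 2 - ‖x (t + 1) - xstar‖ ^ 2))
        = L / 2 * (‖x 0 - xstar‖ ^ 2 - ‖x T - xstar‖ ^ 2) := by
      rw [← Finset.mul_sum]
      congr 1
      exact Finset.sum_range_sub' (fun t => ‖x t - xstar‖ ^ 2) T
    have h4 : L / 2 * (‖x 0 - xstar‖ ^ 2 - ‖x T - xstar‖ ^ 2) ≤ L / 2 * ‖x 0 - xstar‖ ^ 2 := by
      have : (0:ℝ) ≤ ‖x T - xstar‖ ^ 2 := by positivity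
      nlinarith
    linarith
  rw [le_div_iff₀ (by positivity : (0:ℝ) < 2 * T)]
  nlinarith [hsum]
end

section
/- Let f : E → ℝ be μ-strongly convex and L-smooth with minimizer x*. Gradient descent with step 1/L satisfies f(x_{t+1}) - f(x*) ≤ (1 - μ/L)·(f(x_t) - f(x*)). -/
open scoped RealInnerProductSpace

theorem stmt_5 {E : Type*} [NormedAddCommGroup E] [InnerProductSpace ℝ E]
    (f : E → ℝ) (f' : E → E) (L μ : ℝ) (hL : 0 < L) (hμ : 0 < μ)
    (hsconv : ∀ x y : E, f x + ⟪f' x, y - x⟫ + μ / 2 * ‖y - x‖ ^ 2 ≤ f y)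
    (hsmooth : ∀ x y : E, f y ≤ f x + ⟪f' x, y - x⟫ + L / 2 * ‖y - x‖ ^ 2)
    (xstar : E) (hmin : ∀ y : E, f xstar ≤ f y)
    (x : ℕ → E) (hx : ∀ t : ℕ, x (t + 1) = x t - (1 / L) • f' (x t)) :
    ∀ t : ℕ, f (x (t + 1)) - f xstar ≤ (1 - μ / L) * (f (x t) - f xstar) := by
  intro t
  set g := f' (x t) with hg
  have hdiff : ∀ c : ℝ, (x t - c • g) - x t = -(c • g) := by intro c; abel
  have hinner : ∀ c : ℝ, ⟪g, (x t - c • g) - x t⟫ = -(c * ‖g‖ ^ 2) := by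
    intro c
    rw [hdiff, inner_neg_right, real_inner_smul_right, real_inner_self_eq_norm_sq]
  have hnorm : ∀ c : ℝ, 0 ≤ c → ‖(x t - c • g) - x t‖ ^ 2 = c ^ 2 * ‖g‖ ^ 2 := by
    intro c hc
    rw [hdiff, norm_neg, norm_smul, Real.norm_eq_abs, abs_of_nonneg hc, mul_pow]
  -- PL inequality
  have hPL : 2 * μ * (f (x t) - f xstar) ≤ ‖g‖ ^ 2 := by
    have h := hsconv (x t) xstar
    have key : (0:ℝ) ≤ ‖μ • (xstar - x t) + g‖ ^ 2 := sq_nonneg _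
    rw [norm_add_sq_real, norm_smul, Real.norm_eq_abs, abs_of_pos hμ, mul_pow,
      real_inner_smul_left] at key
    rw [real_inner_comm] at h
    nlinarith [sq_nonneg ‖xstar - x t‖]
  -- descent lemma
  have hdesc : f (x (t + 1)) ≤ f (x t) - ‖g‖ ^ 2 / (2 * L) := by
    have h := hsmooth (x t) (x t - (1 / L) • g)
    rw [hinner, hnorm _ (by positivity)] at h
    rw [hx t, ← hg]
    have e : -(1 / L * ‖g‖ ^ 2) + L / 2 * ((1 / L) ^ 2 * ‖g‖ ^ 2) = -(‖g‖ ^ 2 / (2 * L)) := by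
      field_simp; ring
    linarith
  have hfin : μ / L * (f (x t) - f xstar) ≤ ‖g‖ ^ 2 / (2 * L) := by
    rw [div_mul_eq_mul_div, div_le_div_iff₀ hL (by positivity)]
    nlinarith
  nlinarith
end

section
/- Let f : E → ℝ be convex, g : E → ℝ ∪ {+∞} proper convex lower semicontinuous, F = f + g be μ-strongly convex with minimizer x*, and suppose f is L-smooth. For the composite gradient iterates x_{t+1} = argmin_y { ⟨∇f(x_t), y - x_t⟩ + (L/2)‖y - x_t‖² + g(y) }, it holds that F(x_{t+1}) - F(x*) ≤ (1 - μ/(4L))·(F(x_t) - F(x*)). -/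
open scoped RealInnerProductSpace

theorem stmt_6 {E : Type*} [NormedAddCommGroup E] [InnerProductSpace ℝ E]
    [CompleteSpace E]
    (f g : E → ℝ) (f' : E → E) (L μ : ℝ) (hμ : 0 < μ) (hμL : μ ≤ L)
    (hconv : ∀ x y : E, f x + ⟪f' x, y - x⟫ ≤ f y)
    (hsmooth : ∀ x y : E, f y ≤ f x + ⟪f' x, y - x⟫ + L / 2 * ‖y - x‖ ^ 2)
    (hg : ConvexOn ℝ Set.univ g) (hglsc : LowerSemicontinuous g)
    (F : E → ℝ) (hF : ∀ x, F x = f x + g x)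
    (hFsconv : ∀ x y : E, ∀ θ : ℝ, 0 ≤ θ → θ ≤ 1 →
      F (θ • x + (1 - θ) • y) ≤
        θ * F x + (1 - θ) * F y - μ / 2 * θ * (1 - θ) * ‖x - y‖ ^ 2)
    (xstar : E) (hmin : ∀ y : E, F xstar ≤ F y)
    (x : ℕ → E)
    (hx : ∀ t : ℕ, ∀ y : E,
      ⟪f' (x t), x (t + 1) - x t⟫ + L / 2 * ‖x (t + 1) - x t‖ ^ 2 + g (x (t + 1)) ≤
        ⟪f' (x t), y - x t⟫ + L / 2 * ‖y - x t‖ ^ 2 + g y) :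
    ∀ t : ℕ, F (x (t + 1)) - F xstar ≤ (1 - μ / (4 * L)) * (F (x t) - F xstar) := by
  have hL : 0 < L := lt_of_lt_of_le hμ hμL
  intro t
  set a := x t with ha
  set b := x (t + 1) with hb
  -- key descent inequality: F b ≤ F y + L/2 ‖y - a‖² for all y
  have key : ∀ y : E, F b ≤ F y + L / 2 * ‖y - a‖ ^ 2 := by
    intro y
    have h1 := hsmooth a b
    have h2 := hx t y
    have h3 := hconv a y
    rw [hF b, hF y]
    linarith
  set θ : ℝ := μ / (2 * L) with hθ
  have hθ0 : 0 ≤ θ := by positivity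
  have hθhalf : θ ≤ 1 / 2 := by
    rw [hθ, div_le_div_iff₀ (by linarith) (by norm_num)]
    linarith
  have hθ1 : θ ≤ 1 := by linarith
  set y := θ • xstar + (1 - θ) • a with hy
  have hnorm : ‖y - a‖ ^ 2 = θ ^ 2 * ‖xstar - a‖ ^ 2 := by
    have : y - a = θ • (xstar - a) := by
      rw [hy]; module
    rw [this, norm_smul, Real.norm_eq_abs, abs_of_nonneg hθ0, mul_pow]
  have hsc := hFsconv xstar a θ hθ0 hθ1
  have hk := key y
  rw [hnorm] at hk
  set d := ‖xstar - a‖ ^ 2 with hd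
  have hd0 : 0 ≤ d := by positivity
  -- coefficient bound
  have hcoef : L / 2 * (θ ^ 2 * d) ≤ μ / 2 * θ * (1 - θ) * d := by
    have h1 : L / 2 * θ ^ 2 ≤ μ / 2 * θ * (1 - θ) := by
      have hLθ : L * θ = μ / 2 := by
        rw [hθ]; field_simp
      nlinarith
    nlinarith
  have hΔ : 0 ≤ F a - F xstar := by linarith [hmin a]
  have hstep : F b - F xstar ≤ (1 - θ) * (F a - F xstar) := by nlinarith
  have : (1 - θ) * (F a - F xstar) ≤ (1 - μ / (4 * L)) * (F a - F xstar) := by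
    apply mul_le_mul_of_nonneg_right _ hΔ
    have : μ / (4 * L) ≤ θ := by
      rw [hθ, div_le_div_iff₀ (by linarith) (by linarith)]
      nlinarith
    linarith
  linarith
end

section
/- Let f : E → ℝ be convex and G-Lipschitz on the ball B(x*, √2·R) in a Hilbert space, where x* is a minimizer and ‖x_0 - x*‖ ≤ R. Then subgradient descent x_{t+1} = x_t - η·v_t with v_t ∈ ∂f(x_t) and η = R/(G√T) satisfies ‖x_t - x*‖ ≤ √2·R for all t ≤ T, and (1/T)∑_{t=0}^{T-1}(f(x_t) - f(x*)) ≤ G·R/√T. -/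
open scoped RealInnerProductSpace

theorem stmt_12 {E : Type*} [NormedAddCommGroup E] [InnerProductSpace ℝ E]
    [CompleteSpace E]
    (f : E → ℝ) (G R : ℝ) (hG : 0 < G) (hR : 0 < R)
    (xstar : E)
    (hconvB : ConvexOn ℝ (Metric.closedBall xstar (Real.sqrt 2 * R)) f)
    (hlip : LipschitzOnWith (Real.toNNReal G) f (Metric.closedBall xstar (Real.sqrt 2 * R)))
    (hmin : ∀ z ∈ Metric.closedBall xstar (Real.sqrt 2 * R), f xstar ≤ f z)
    (T : ℕ) (hT : 1 ≤ T) (η : ℝ) (hη : η = R / (G * Real.sqrt T))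
    (x : ℕ → E) (hx0 : ‖x 0 - xstar‖ ≤ R)
    (v : ℕ → E)
    (hsubgrad : ∀ t : ℕ, t < T → ∀ z ∈ Metric.closedBall xstar (Real.sqrt 2 * R),
      f (x t) + ⟪v t, z - x t⟫ ≤ f z)
    (hvnorm : ∀ t : ℕ, t < T → ‖v t‖ ≤ G)
    (hstep : ∀ t : ℕ, x (t + 1) = x t - η • v t) :
    (∀ t : ℕ, t ≤ T → ‖x t - xstar‖ ≤ Real.sqrt 2 * R) ∧
    (1 / (T : ℝ)) * ∑ t ∈ Finset.range T, (f (x t) - f xstar) ≤ G * R / Real.sqrt T := by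
  have hT' : (0:ℝ) < T := by exact_mod_cast hT
  have hsT : 0 < Real.sqrt T := Real.sqrt_pos.mpr hT'
  have hη0 : 0 < η := by rw [hη]; positivity
  set a : ℕ → ℝ := fun t => ‖x t - xstar‖^2 with ha
  have hstar : xstar ∈ Metric.closedBall xstar (Real.sqrt 2 * R) := by
    simp [Metric.mem_closedBall]; positivity
  have hηGT : η^2 * G^2 * T = R^2 := by
    rw [hη, div_pow, mul_pow, Real.sq_sqrt hT'.le]
    field_simp
  -- key one-step inequality
  have key : ∀ t, t < T → a (t+1) + 2*η*(f (x t) - f xstar) ≤ a t + η^2 * G^2 := by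
    intro t ht
    have hs := hsubgrad t ht xstar hstar
    have hv := hvnorm t ht
    have hip : f (x t) - f xstar ≤ ⟪v t, x t - xstar⟫ := by
      have : ⟪v t, xstar - x t⟫ = -⟪v t, x t - xstar⟫ := by
        rw [← inner_neg_right]; congr 1; abel
      rw [this] at hs; linarith
    have hexp : a (t+1) = a t - 2*η*⟪v t, x t - xstar⟫ + η^2 * ‖v t‖^2 := by
      show ‖x (t+1) - xstar‖^2 = _
      rw [hstep t]
      have h1 : x t - η • v t - xstar = (x t - xstar) - η • v t := by abel
      rw [h1, norm_sub_sq_real, real_inner_smul_right, norm_smul,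
        real_inner_comm, mul_pow]
      have : |η| = η := abs_of_pos hη0
      rw [Real.norm_eq_abs, this]
      ring
    have hv2 : ‖v t‖^2 ≤ G^2 := by
      have := norm_nonneg (v t)
      nlinarith
    nlinarith
  -- inductive bound on distance squared
  have hbound : ∀ t, t ≤ T → a t ≤ R^2 + t * (η^2 * G^2) := by
    intro t
    induction t with
    | zero =>
      intro _
      simpa using pow_le_pow_left₀ (norm_nonneg _) hx0 2
    | succ n ih =>
      intro hn
      have hn' : n < T := hn
      have ihn := ih hn'.le
      have h2 : a n ≤ 2 * R^2 := by
        have : (n:ℝ) * (η^2 * G^2) ≤ T * (η^2 * G^2) := by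
          have : (n:ℝ) ≤ T := by exact_mod_cast hn'.le
          nlinarith [sq_nonneg η, sq_nonneg G, mul_pos (pow_pos hη0 2) (pow_pos hG 2)]
        nlinarith
      have hmem : x n ∈ Metric.closedBall xstar (Real.sqrt 2 * R) := by
        rw [Metric.mem_closedBall, dist_eq_norm]
        have h3 : ‖x n - xstar‖ = Real.sqrt (a n) := (Real.sqrt_sq (norm_nonneg _)).symm
        rw [h3]
        calc Real.sqrt (a n) ≤ Real.sqrt (2 * R^2) := Real.sqrt_le_sqrt h2
          _ = Real.sqrt 2 * R := by
              rw [Real.sqrt_mul (by norm_num), Real.sqrt_sq hR.le]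
      have hfge : f xstar ≤ f (x n) := hmin _ hmem
      have hk := key n hn'
      have : a (n+1) ≤ a n + η^2 * G^2 := by nlinarith
      push_cast
      nlinarith
  constructor
  · intro t ht
    have h2 : a t ≤ 2 * R^2 := by
      have := hbound t ht
      have hle : (t:ℝ) * (η^2 * G^2) ≤ T * (η^2 * G^2) := by
        have : (t:ℝ) ≤ T := by exact_mod_cast ht
        nlinarith [mul_pos (pow_pos hη0 2) (pow_pos hG 2)]
      nlinarith
    have h3 : ‖x t - xstar‖ = Real.sqrt (a t) := (Real.sqrt_sq (norm_nonneg _)).symm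
    rw [h3]
    calc Real.sqrt (a t) ≤ Real.sqrt (2 * R^2) := Real.sqrt_le_sqrt h2
      _ = Real.sqrt 2 * R := by
          rw [Real.sqrt_mul (by norm_num), Real.sqrt_sq hR.le]
  · -- sum bound
    set S : ℝ := ∑ t ∈ Finset.range T, (f (x t) - f xstar) with hS
    have htel : ∑ t ∈ Finset.range T, (a t - a (t+1)) = a 0 - a T := by
      rw [← Finset.sum_range_sub' a T]
    have hsum : 2*η*S ≤ a 0 - a T + T * (η^2 * G^2) := by
      have h1 : ∑ t ∈ Finset.range T, (2*η*(f (x t) - f xstar)) ≤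
          ∑ t ∈ Finset.range T, ((a t - a (t+1)) + η^2 * G^2) := by
        apply Finset.sum_le_sum
        intro t ht
        have := key t (Finset.mem_range.mp ht)
        linarith
      rw [← Finset.mul_sum] at h1
      rw [Finset.sum_add_distrib, htel, Finset.sum_const, Finset.card_range,
        nsmul_eq_mul] at h1
      linarith
    have ha0 : a 0 ≤ R^2 := by
      simpa using pow_le_pow_left₀ (norm_nonneg _) hx0 2
    have haT : 0 ≤ a T := sq_nonneg _
    have hS2 : 2*η*S ≤ 2*R^2 := by nlinarith
    have hSle : S ≤ G * R * Real.sqrt T := by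
      have hdiv : R^2 / η = G * R * Real.sqrt T := by
        rw [hη]; field_simp
      rw [← hdiv]
      rw [le_div_iff₀ hη0]
      have hc : S * η = η * S := mul_comm _ _
      linarith
    have hss : Real.sqrt T * Real.sqrt T = T := Real.mul_self_sqrt hT'.le
    rw [one_div, inv_mul_le_iff₀ hT']
    have heq : G * R / Real.sqrt T * T = G * R * Real.sqrt T := by
      rw [div_mul_eq_mul_div, eq_comm, eq_div_iff hsT.ne']
      linear_combination G * R * hss
    rw [mul_comm (T:ℝ), heq]
    exact hSle
end

section
/- Let Y be a compact convex subset of ℝ^m and f : ℝ^n × Y → ℝ continuous, such that f(·, y) is differentiable for each y and for a given x the maximizer y*(x) = argmax_{y∈Y} f(x, y) is unique, with (x,y) ↦ ∇_x f(x, y) continuous. Then φ(x) := max_{y∈Y} f(x, y) is differentiable at x with ∇φ(x) = ∇_x f(x, y*(x)). -/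
/-!
Let `y x'` maximize `f x'` on `Y`, so that `φ x' = f x' (y x')`. Then
`f x' y₀ - f x y₀ ≤ φ x' - φ x ≤ f x' (y x') - f x (y x')`.
Uniqueness of the maximizer and compactness of `Y` force `y x' → y₀`, and the mean value inequality
together with continuity of `∇ₓ f` at `(x, y₀)` gives
`f x' y - f x y = ⟪∇ₓ f (x, y₀), x' - x⟫ + o(‖x' - x‖)` uniformly for `y` near `y₀`.
Both bounds are therefore `⟪∇ₓ f (x, y₀), x' - x⟫ + o(‖x' - x‖)`.
-/

open Filter Topology Asymptotics

theorem IsMaxOn.csSup_image_eq {α : Type*} {f : α → ℝ} {s : Set α} {a : α} (hf : IsMaxOn f s a)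
    (ha : a ∈ s) : sSup (f '' s) = f a :=
  IsGreatest.csSup_eq ⟨Set.mem_image_of_mem f ha, Set.forall_mem_image.2 hf⟩

theorem Asymptotics.IsLittleO.of_le_of_le {α E : Type*} [Norm E] {l : Filter α} {a g b : α → ℝ}
    {h : α → E} (ha : a =o[l] h) (hb : b =o[l] h) (hag : ∀ᶠ t in l, a t ≤ g t)
    (hgb : ∀ᶠ t in l, g t ≤ b t) : g =o[l] h := by
  refine (IsBigO.of_bound 1 ?_).trans_isLittleO (ha.norm_left.add hb.norm_left)
  filter_upwards [hag, hgb] with t hat htb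
  simp only [Real.norm_eq_abs, one_mul]
  rw [abs_of_nonneg (a := |a t| + |b t|) (by positivity)]
  exact (abs_le_max_abs_abs hat htb).trans (max_le_add_of_nonneg (abs_nonneg _) (abs_nonneg _))

theorem tendsto_of_isMaxOn_of_forall_lt {X F : Type*} [TopologicalSpace X] [TopologicalSpace F]
    {g : X → F → ℝ} {Y : Set F} {x : X} {y₀ : F} {y : X → F}
    (hg : Continuous (Function.uncurry g)) (hY : IsCompact Y)
    (hy₀Y : y₀ ∈ Y) (hy₀ : ∀ z ∈ Y, z ≠ y₀ → g x z < g x y₀) (hyY : ∀ x', y x' ∈ Y)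
    (hy : ∀ x', IsMaxOn (g x') Y (y x')) : Tendsto y (𝓝 x) (𝓝 y₀) := by
  refine (nhds_basis_opens y₀).tendsto_right_iff.2 fun U ⟨hy₀U, hU⟩ => ?_
  -- off `U`, the strict inequality at `x` persists uniformly near `x` by compactness of `Y \ U`
  have hbeaten : ∀ᶠ x' in 𝓝 x, ∀ z ∈ Y \ U, g x' z < g x' y₀ :=
    (hY.diff hU).eventually_forall_of_forall_eventually fun z hz =>
      hg.continuousAt.eventually_lt (hg.comp (continuous_fst.prodMk continuous_const)).continuousAt
        (hy₀ z hz.1 fun h => hz.2 (h ▸ hy₀U))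
  filter_upwards [hbeaten] with x' hx'
  by_contra hyU
  exact (hx' _ ⟨hyY x', hyU⟩).not_ge (hy x' hy₀Y)

section
variable {E F G : Type*} [NormedAddCommGroup E] [NormedSpace ℝ E] [TopologicalSpace F]
  [NormedAddCommGroup G] [NormedSpace ℝ G]

theorem isLittleO_sub_fderiv_of_continuousAt {f : E → F → G} {f' : E → F → E →L[ℝ] G} {x : E}
    {y₀ : F} (hf : ∀ x' y, HasFDerivAt (f · y) (f' x' y) x')
    (hf' : ContinuousAt (Function.uncurry f') (x, y₀)) :
    (fun p : E × F => f p.1 p.2 - f x p.2 - f' x y₀ (p.1 - x)) =o[𝓝 (x, y₀)] fun p => p.1 - x := by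
  refine isLittleO_iff.2 fun ε hε => ?_
  obtain ⟨U, hU, V, hV, hUV⟩ := mem_nhds_prod_iff.1 (hf' (Metric.ball_mem_nhds _ hε))
  obtain ⟨δ, hδ, hball⟩ := Metric.mem_nhds_iff.1 hU
  filter_upwards [prod_mem_nhds (Metric.ball_mem_nhds x hδ) hV] with p hp
  refine (convex_ball x δ).norm_image_sub_le_of_norm_hasFDerivWithin_le' (f := (f · p.2))
    (fun z _ => (hf z p.2).hasFDerivWithinAt) (fun z hz => ?_) (Metric.mem_ball_self hδ) hp.1
  have hclose := hUV (show (z, p.2) ∈ U ×ˢ V from ⟨hball hz, hp.2⟩)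
  rw [Set.mem_preimage, Metric.mem_ball, dist_eq_norm] at hclose
  exact hclose.le

theorem hasFDerivAt_sSup_image {f : E → F → ℝ} {f' : E → F → E →L[ℝ] ℝ} {Y : Set F} {x : E}
    {y₀ : F} (hYne : Y.Nonempty) (hY : IsCompact Y) (hf : Continuous (Function.uncurry f))
    (hf' : ∀ x' y, HasFDerivAt (f · y) (f' x' y) x')
    (hf'c : ContinuousAt (Function.uncurry f') (x, y₀)) (hy₀Y : y₀ ∈ Y)
    (hy₀ : ∀ z ∈ Y, z ≠ y₀ → f x z < f x y₀) :
    HasFDerivAt (fun x' => sSup (f x' '' Y)) (f' x y₀) x := by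
  have hmax : IsMaxOn (f x) Y y₀ := isMaxOn_iff.2 fun z hz => by
    rcases eq_or_ne z y₀ with rfl | hne
    exacts [le_rfl, (hy₀ z hz hne).le]
  have hfx (x' : E) : Continuous (f x') := hf.comp (Continuous.prodMk_right x')
  choose y hyY hymax using fun x' => hY.exists_isMaxOn hYne (hfx x').continuousOn
  have hy : Tendsto y (𝓝 x) (𝓝 y₀) := tendsto_of_isMaxOn_of_forall_lt hf hY hy₀Y hy₀ hyY hymax
  have hrem := isLittleO_sub_fderiv_of_continuousAt hf' hf'c
  have hlow := hrem.comp_tendsto (tendsto_id.prodMk_nhds tendsto_const_nhds)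
  have hup := hrem.comp_tendsto (tendsto_id.prodMk_nhds hy)
  rw [hasFDerivAt_iff_isLittleO]
  refine hlow.of_le_of_le hup (Eventually.of_forall fun x' => ?_)
    (Eventually.of_forall fun x' => ?_)
  all_goals
    simp only [Function.comp_apply, id, hmax.csSup_image_eq hy₀Y,
      (hymax x').csSup_image_eq (hyY x')]
  · linarith [isMaxOn_iff.1 (hymax x') y₀ hy₀Y]
  · linarith [isMaxOn_iff.1 hmax (y x') (hyY x')]

end

theorem stmt_18_general (n m : ℕ)
    (Y : Set (EuclideanSpace ℝ (Fin m))) (hYne : Y.Nonempty)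
    (hYcomp : IsCompact Y)
    (f : EuclideanSpace ℝ (Fin n) → EuclideanSpace ℝ (Fin m) → ℝ)
    (hfcont : Continuous (fun p : EuclideanSpace ℝ (Fin n) × EuclideanSpace ℝ (Fin m) =>
      f p.1 p.2))
    (G : EuclideanSpace ℝ (Fin n) → EuclideanSpace ℝ (Fin m) → EuclideanSpace ℝ (Fin n))
    (hG : ∀ x' : EuclideanSpace ℝ (Fin n), ∀ y : EuclideanSpace ℝ (Fin m),
      HasGradientAt (fun x'' => f x'' y) (G x' y) x')
    (hGcont : Continuous (fun p : EuclideanSpace ℝ (Fin n) × EuclideanSpace ℝ (Fin m) =>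
      G p.1 p.2))
    (x : EuclideanSpace ℝ (Fin n)) (ystar : EuclideanSpace ℝ (Fin m))
    (hystar : ystar ∈ Y) (hmax : ∀ y ∈ Y, f x y ≤ f x ystar)
    (huniq : ∀ y ∈ Y, f x y = f x ystar → y = ystar)
    (φ : EuclideanSpace ℝ (Fin n) → ℝ)
    (hφ : ∀ x' : EuclideanSpace ℝ (Fin n), φ x' = sSup ((f x') '' Y)) :
    HasGradientAt φ (G x ystar) x := by
  rw [show φ = _ from funext hφ, hasGradientAt_iff_hasFDerivAt]
  exact hasFDerivAt_sSup_image (f' := fun x' y => InnerProductSpace.toDual ℝ _ (G x' y))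
    hYne hYcomp hfcont hG
    ((InnerProductSpace.toDual ℝ _).continuous.comp hGcont).continuousAt hystar
    fun y hy hne => (hmax y hy).lt_of_ne (mt (huniq y hy) hne)

theorem stmt_18 (n m : ℕ)
    (Y : Set (EuclideanSpace ℝ (Fin m))) (hYne : Y.Nonempty)
    (hYcomp : IsCompact Y) (hYconv : Convex ℝ Y)
    (f : EuclideanSpace ℝ (Fin n) → EuclideanSpace ℝ (Fin m) → ℝ)
    (hfcont : Continuous (fun p : EuclideanSpace ℝ (Fin n) × EuclideanSpace ℝ (Fin m) =>
      f p.1 p.2))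
    (G : EuclideanSpace ℝ (Fin n) → EuclideanSpace ℝ (Fin m) → EuclideanSpace ℝ (Fin n))
    (hG : ∀ x' : EuclideanSpace ℝ (Fin n), ∀ y : EuclideanSpace ℝ (Fin m),
      HasGradientAt (fun x'' => f x'' y) (G x' y) x')
    (hGcont : Continuous (fun p : EuclideanSpace ℝ (Fin n) × EuclideanSpace ℝ (Fin m) =>
      G p.1 p.2))
    (x : EuclideanSpace ℝ (Fin n)) (ystar : EuclideanSpace ℝ (Fin m))
    (hystar : ystar ∈ Y) (hmax : ∀ y ∈ Y, f x y ≤ f x ystar)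
    (huniq : ∀ y ∈ Y, f x y = f x ystar → y = ystar)
    (φ : EuclideanSpace ℝ (Fin n) → ℝ)
    (hφ : ∀ x' : EuclideanSpace ℝ (Fin n), φ x' = sSup ((f x') '' Y)) :
    HasGradientAt φ (G x ystar) x :=
  stmt_18_general n m Y hYne hYcomp f hfcont G hG hGcont x ystar hystar hmax huniq φ hφ
end
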